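/- arXiv:1203.0041 — 2 statements merged into one kernel-verified Lean document; each statement's English description precedes it below -/
import Mathlib

section
/- For nonnegative integers p and r, ∫_{-1}^{1} (1-x)^p U_r(x) √(1-x²) dx = (r+1) 2^{p+2} Γ(p+3/2) Γ(3/2) / Γ(p+3) · (-p)_r / (p+3)_r. In particular the integral vanishes when r > p. -/
/-- Pochhammer symbol (rising factorial) `(a)_k`. -/
noncomputable def poch (a : ℝ) (k : ℕ) : ℝ := ∏ i ∈ Finset.range k, (a + i)

/-- Chebyshev polynomial of the second kind, `U_r(x) = (r+1) ₂F₁(-r, r+2; 3/2; (1-x)/2)`. -/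
noncomputable def ChebU (r : ℕ) (x : ℝ) : ℝ :=
  ((r:ℝ)+1) * ∑ j ∈ Finset.range (r+1),
      poch (-(r:ℝ)) j * poch ((r:ℝ)+2) j / (poch (3/2) j * (Nat.factorial j : ℝ))
        * ((1-x)/2)^j

/-!
Put `I(p, r) = ∫_{-1}^{1} (1-x)^p U_r(x) √(1-x²) dx`. Writing `2x = 2 - 2(1-x)` in the three-term
recurrence `U_{r+2} = 2x U_{r+1} - U_r` gives `I(p, r+2) = 2 I(p, r+1) - 2 I(p+1, r+1) - I(p, r)`,
and `I(p, 0) = 2^{p+2} B(p + 3/2, 3/2)` after the substitution `x = 1 - 2t`. The closed form obeys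
the same recurrence, so the two agree by induction on `r`, simultaneously for all `p`.
The recurrence for `U_r` is read off coefficientwise from its hypergeometric expansion, where it
becomes a contiguous relation between Pochhammer quotients.
-/

open Finset intervalIntegral MeasureTheory ProbabilityTheory

lemma poch_succ (a : ℝ) (k : ℕ) : poch a (k + 1) = poch a k * (a + k) :=
  prod_range_succ _ _

lemma poch_succ' (a : ℝ) (k : ℕ) : poch a (k + 1) = a * poch (a + 1) k := by
  rw [poch, prod_range_succ', poch, Nat.cast_zero, add_zero, mul_comm]
  congr 1
  exact prod_congr rfl fun i _ => by push_cast; ring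

lemma mul_poch_add_one (a : ℝ) (k : ℕ) : a * poch (a + 1) k = poch a k * (a + k) := by
  rw [← poch_succ, poch_succ']

lemma poch_pos {a : ℝ} (ha : 0 < a) (k : ℕ) : 0 < poch a k :=
  prod_pos fun _ _ => by positivity

lemma poch_neg_natCast_eq_zero {r j : ℕ} (h : r < j) : poch (-r) j = 0 :=
  prod_eq_zero (mem_range.2 h) (neg_add_cancel _)

noncomputable def chebUCoeff (a : ℝ) (j : ℕ) : ℝ :=
  poch (-a) j * poch (a + 2) j / (poch (3 / 2) j * j.factorial)

lemma ChebU_eq_sum_range {r n : ℕ} (h : r + 1 ≤ n) (x : ℝ) :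
    ChebU r x = (r + 1) * ∑ j ∈ range n, chebUCoeff r j * ((1 - x) / 2) ^ j := by
  refine congrArg _ (sum_subset (range_subset_range.2 h) fun j _ hj => ?_)
  rw [poch_neg_natCast_eq_zero (by simp at hj; omega)]
  simp

lemma chebUCoeff_contiguous {a : ℝ} (h₁ : a + 1 ≠ 0) (h₃ : a + 3 ≠ 0) (m : ℕ) :
    (a + 3) * chebUCoeff (a + 2) (m + 1) - 2 * (a + 2) * chebUCoeff (a + 1) (m + 1)
      + (a + 1) * chebUCoeff a (m + 1) = -4 * (a + 2) * chebUCoeff (a + 1) m := by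
  set A := poch (-(a + 1)) m
  set P := poch (a + 3) m
  have hA : poch (-(a + 2)) (m + 1) = -(a + 2) * A := by
    rw [poch_succ', show -(a + 2) + 1 = -(a + 1) by ring]
  have hC : poch (-a) (m + 1) = -(A * (-(a + 1) + m) * (-(a + 1) + (m + 1))) / (a + 1) := by
    have h := mul_poch_add_one (-(a + 1)) (m + 1)
    rw [show -(a + 1) + 1 = -a by ring, poch_succ (-(a + 1)) m] at h
    push_cast at h
    rw [eq_div_iff h₁]
    linear_combination -h
  have hD : poch (a + 2 + 2) (m + 1) = P * (a + 3 + m) * (a + 3 + (m + 1)) / (a + 3) := by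
    have h := mul_poch_add_one (a + 3) (m + 1)
    rw [show a + 3 + 1 = a + 2 + 2 by ring, poch_succ (a + 3) m] at h
    push_cast at h
    rw [eq_div_iff h₃]
    linear_combination h
  have hF : poch (a + 2) (m + 1) = (a + 2) * P := by
    rw [poch_succ', show a + 2 + 1 = a + 3 by ring]
  have : (0 : ℝ) < poch (3 / 2) m := poch_pos (by norm_num) m
  simp only [chebUCoeff, Nat.factorial_succ, Nat.cast_mul, Nat.cast_succ]
  rw [hA, hC, hD, hF, show a + 1 + 2 = a + 3 by ring, poch_succ (-(a + 1)), poch_succ (a + 3),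
    poch_succ (3 / 2)]
  field_simp
  ring

lemma chebUCoeff_zero (a : ℝ) : chebUCoeff a 0 = 1 := by
  simp [chebUCoeff, poch]

lemma chebUCoeff_natCast_eq_zero {r j : ℕ} (h : r < j) : chebUCoeff r j = 0 := by
  simp [chebUCoeff, poch_neg_natCast_eq_zero h]

lemma ChebU_zero (x : ℝ) : ChebU 0 x = 1 := by
  simp [ChebU, poch]

lemma ChebU_one (x : ℝ) : ChebU 1 x = 2 * x := by
  norm_num [ChebU, poch, sum_range_succ]
  ring

lemma ChebU_add_two (r : ℕ) (x : ℝ) :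
    ChebU (r + 2) x = 2 * x * ChebU (r + 1) x - ChebU r x := by
  obtain ⟨y, rfl⟩ : ∃ y, x = 1 - 2 * y := ⟨(1 - x) / 2, by ring⟩
  have hsum : ∑ j ∈ range (r + 3), ((r + 3) * chebUCoeff (r + 2) j
        - 2 * (r + 2) * chebUCoeff (r + 1) j + (r + 1) * chebUCoeff r j) * y ^ j
      = -4 * (r + 2) * y * ∑ j ∈ range (r + 3), chebUCoeff (r + 1) j * y ^ j := by
    have htop : chebUCoeff (r + 1) (r + 2) = 0 := by
      exact_mod_cast chebUCoeff_natCast_eq_zero (Nat.lt_succ_self (r + 1))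
    have hbot : (r + 3) * chebUCoeff (r + 2) 0 - 2 * (r + 2) * chebUCoeff (r + 1) 0
        + (r + 1) * chebUCoeff r 0 = 0 := by
      simp only [chebUCoeff_zero]; ring
    rw [sum_range_succ', sum_range_succ _ (r + 2), htop, hbot, zero_mul, zero_mul, add_zero,
      add_zero, mul_sum]
    refine sum_congr rfl fun m _ => ?_
    rw [chebUCoeff_contiguous (by positivity) (by positivity)]
    ring
  simp only [add_mul, sub_mul, sum_add_distrib, sum_sub_distrib, mul_assoc, ← mul_sum] at hsum
  rw [ChebU_eq_sum_range (n := r + 3) le_rfl, ChebU_eq_sum_range (n := r + 3) (by omega),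
    ChebU_eq_sum_range (n := r + 3) (by omega), show (1 - (1 - 2 * y)) / 2 = y by ring]
  push_cast
  linear_combination hsum

lemma continuous_ChebU (r : ℕ) : Continuous (ChebU r) := by
  unfold ChebU; fun_prop

noncomputable def weightedMoment (p : ℕ) (f : ℝ → ℝ) : ℝ :=
  ∫ x in (-1 : ℝ)..1, (1 - x) ^ p * f x * Real.sqrt (1 - x ^ 2)

lemma intervalIntegrable_weighted {f : ℝ → ℝ} (hf : Continuous f) (p : ℕ) :
    IntervalIntegrable (fun x => (1 - x) ^ p * f x * Real.sqrt (1 - x ^ 2)) volume (-1) 1 :=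
  (by fun_prop : Continuous _).intervalIntegrable _ _

lemma weightedMoment_sub {f g : ℝ → ℝ} (hf : Continuous f) (hg : Continuous g) (p : ℕ) :
    weightedMoment p (f - g) = weightedMoment p f - weightedMoment p g := by
  simp only [weightedMoment, Pi.sub_apply, mul_sub, sub_mul]
  exact integral_sub (intervalIntegrable_weighted hf p) (intervalIntegrable_weighted hg p)

lemma weightedMoment_two_mul_id {f : ℝ → ℝ} (hf : Continuous f) (p : ℕ) :
    weightedMoment p (fun x => 2 * x * f x)
      = 2 * weightedMoment p f - 2 * weightedMoment (p + 1) f := by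
  have h : ∀ x : ℝ, (1 - x) ^ p * (2 * x * f x) * Real.sqrt (1 - x ^ 2)
      = 2 * ((1 - x) ^ p * f x * Real.sqrt (1 - x ^ 2))
        - 2 * ((1 - x) ^ (p + 1) * f x * Real.sqrt (1 - x ^ 2)) := fun x => by ring
  simp only [weightedMoment, h]
  rw [integral_sub ((intervalIntegrable_weighted hf p).const_mul 2)
    ((intervalIntegrable_weighted hf (p + 1)).const_mul 2), intervalIntegral.integral_const_mul,
    intervalIntegral.integral_const_mul]

lemma integral_rpow_mul_one_sub_rpow {u v : ℝ} (hu : 0 < u) (hv : 0 < v) :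
    ∫ x in (0 : ℝ)..1, x ^ (u - 1) * (1 - x) ^ (v - 1)
      = Real.Gamma u * Real.Gamma v / Real.Gamma (u + v) := by
  have h := Complex.betaIntegral_eq_Gamma_mul_div u v (by simpa) (by simpa)
  rw [Complex.betaIntegral, ← Complex.ofReal_add, Complex.Gamma_ofReal, Complex.Gamma_ofReal,
    Complex.Gamma_ofReal] at h
  have hint : ∫ x in (0 : ℝ)..1, ((x ^ (u - 1) * (1 - x) ^ (v - 1) : ℝ) : ℂ)
      = ∫ x in (0 : ℝ)..1, (x : ℂ) ^ ((u : ℂ) - 1) * (1 - (x : ℂ)) ^ ((v : ℂ) - 1) := by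
    refine integral_congr fun x hx => ?_
    rw [Set.uIcc_of_le zero_le_one] at hx
    rw [Complex.ofReal_mul, Complex.ofReal_cpow hx.1, Complex.ofReal_cpow (sub_nonneg.2 hx.2)]
    push_cast
    rfl
  rw [← hint, intervalIntegral.integral_ofReal] at h
  exact_mod_cast h

lemma weightedMoment_one (p : ℕ) :
    weightedMoment p 1 = 2 ^ (p + 2) * beta (p + 3 / 2) (3 / 2) := by
  have hsubst := integral_comp_sub_mul (a := 0) (b := 1)
    (fun x : ℝ => (1 - x) ^ p * 1 * Real.sqrt (1 - x ^ 2)) two_ne_zero 1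
  norm_num at hsubst
  have hpt : ∀ t ∈ Set.uIcc (0 : ℝ) 1, (2 * t) ^ p * Real.sqrt (1 - (1 - 2 * t) ^ 2)
      = 2 ^ (p + 1) * (t ^ ((p : ℝ) + 3 / 2 - 1) * (1 - t) ^ ((3 : ℝ) / 2 - 1)) := by
    intro t ht
    rw [Set.uIcc_of_le zero_le_one] at ht
    rw [show 1 - (1 - 2 * t) ^ 2 = 2 ^ 2 * t * (1 - t) by ring,
      Real.sqrt_mul (by linarith [ht.1]), Real.sqrt_mul (by positivity), Real.sqrt_sq zero_le_two,
      show (p : ℝ) + 3 / 2 - 1 = p + 1 / 2 by ring, show (3 : ℝ) / 2 - 1 = 1 / 2 by ring,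
      Real.rpow_add' ht.1 (by positivity), Real.rpow_natCast, ← Real.sqrt_eq_rpow,
      ← Real.sqrt_eq_rpow]
    ring
  rw [integral_congr hpt, intervalIntegral.integral_const_mul,
    integral_rpow_mul_one_sub_rpow (by positivity) (by positivity)] at hsubst
  simp only [weightedMoment, Pi.one_apply, mul_one, beta]
  linear_combination (-2) * hsubst

lemma beta_add_one_left {a b : ℝ} (ha : a ≠ 0) (hab : a + b ≠ 0) :
    beta (a + 1) b = a / (a + b) * beta a b := by
  rw [beta, beta, Real.Gamma_add_one ha, add_right_comm, Real.Gamma_add_one hab,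
    div_mul_div_comm, mul_assoc]

lemma beta_succ_three_halves (p : ℕ) :
    beta ((p + 1 : ℕ) + 3 / 2) (3 / 2) = (p + 3 / 2) / (p + 3) * beta (p + 3 / 2) (3 / 2) := by
  rw [Nat.cast_succ, add_right_comm, beta_add_one_left (by positivity) (by positivity)]
  ring_nf

noncomputable def chebUMoment (p r : ℕ) : ℝ :=
  (r + 1) * 2 ^ (p + 2) * beta (p + 3 / 2) (3 / 2) * (poch (-p) r / poch (p + 3) r)

lemma chebUMoment_zero (p : ℕ) : chebUMoment p 0 = 2 ^ (p + 2) * beta (p + 3 / 2) (3 / 2) := by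
  simp [chebUMoment, poch]

lemma chebUMoment_one (p : ℕ) :
    chebUMoment p 1 = 2 * chebUMoment p 0 - 2 * chebUMoment (p + 1) 0 := by
  rw [chebUMoment_zero, chebUMoment_zero, beta_succ_three_halves]
  simp only [chebUMoment, poch, prod_range_one, Nat.cast_zero, add_zero]
  field_simp
  ring

lemma chebUMoment_add_two (p r : ℕ) :
    chebUMoment p (r + 2)
      = 2 * chebUMoment p (r + 1) - 2 * chebUMoment (p + 1) (r + 1) - chebUMoment p r := by
  have hnum : poch (-((p + 1 : ℕ) : ℝ)) (r + 1) = -(p + 1) * poch (-p) r := by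
    rw [poch_succ']; push_cast; ring_nf
  have hden : poch ((p + 1 : ℕ) + 3) (r + 1)
      = poch (p + 3) r * (p + 3 + r) * (p + 3 + (r + 1)) / (p + 3) := by
    have h := mul_poch_add_one ((p : ℝ) + 3) (r + 1)
    rw [poch_succ ((p : ℝ) + 3) r] at h
    push_cast at h ⊢
    rw [eq_div_iff (by positivity), show (p : ℝ) + 1 + 3 = p + 3 + 1 by ring]
    linear_combination h
  have : 0 < poch (p + 3) r := poch_pos (by positivity) r
  simp only [chebUMoment, beta_succ_three_halves, hnum, hden, poch_succ _ (r + 1), poch_succ _ r]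
  push_cast
  field_simp
  ring

lemma weightedMoment_ChebU (p r : ℕ) : weightedMoment p (ChebU r) = chebUMoment p r := by
  have h₀ : ∀ p, weightedMoment p (ChebU 0) = chebUMoment p 0 := fun p => by
    rw [show ChebU 0 = 1 from funext ChebU_zero, weightedMoment_one, chebUMoment_zero]
  induction r using Nat.twoStepInduction generalizing p with
  | zero => exact h₀ p
  | one =>
    have hU : ChebU 1 = fun x => 2 * x * ChebU 0 x := funext fun x => by
      rw [ChebU_one, ChebU_zero, mul_one]
    rw [hU, weightedMoment_two_mul_id (continuous_ChebU 0), h₀, h₀, chebUMoment_one]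
  | more n ih₀ ih₁ =>
    have hU : ChebU (n + 2) = (fun x => 2 * x * ChebU (n + 1) x) - ChebU n :=
      funext (ChebU_add_two n)
    have hc := continuous_ChebU (n + 1)
    rw [hU, weightedMoment_sub (by fun_prop) (continuous_ChebU n),
      weightedMoment_two_mul_id hc, ih₁, ih₁, ih₀, chebUMoment_add_two]

/-- `∫_{-1}^{1} (1-x)^p U_r(x) √(1-x²) dx
      = (r+1) 2^{p+2} Γ(p+3/2) Γ(3/2) / Γ(p+3) · (-p)_r / (p+3)_r`. -/
theorem chebU_moment (p r : ℕ) :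
    ∫ x in (-1:ℝ)..1, (1 - x)^p * ChebU r x * Real.sqrt (1 - x^2) =
      ((r:ℝ)+1) * 2^(p+2) * Real.Gamma ((p:ℝ) + 3/2) * Real.Gamma (3/2)
        / Real.Gamma ((p:ℝ)+3) * (poch (-(p:ℝ)) r / poch ((p:ℝ)+3) r) := by
  rw [← weightedMoment, weightedMoment_ChebU, chebUMoment, beta,
    show (p : ℝ) + 3 / 2 + 3 / 2 = p + 3 by ring]
  ring
end

section
/- Fix ℓ ∈ ½ℕ with 2ℓ ≥ 1. Let sgn_k(n) ∈ {±1} satisfy the recursion sgn_k(n+1)(n+1)(2ℓ+n+2) = -sgn_k(n)(n+k+2)(2ℓ-k+n+1) + sgn_{k+1}(n)(2ℓ-k)(k+1) for 0 ≤ k < 2ℓ (and appropriately at k = 2ℓ), with sgn_k(0) = 1 for all k. Then sgn_k(n) = (-1)^n for all k and n. -/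
/-!
The recursion expresses `sgn_k(n+1)` through `sgn_k(n)` and `sgn_{k+1}(n)` with the positive
coefficient `(n+1)(L+n+2)`, and at `k = L` the `sgn_{L+1}` term drops out; so for `k ≤ L` a
solution is determined by its values at `n = 0`. The sequence `(-1)^n` is a solution because
`(n+k+2)(L-k+n+1) = (n+1)(L+n+2) + (k+1)(L-k)`.
-/

def IsSignRecursion (L : ℕ) (s : ℕ → ℕ → ℝ) : Prop :=
  ∀ k, k ≤ L → ∀ n,
    s k (n+1) * ((n:ℝ)+1) * ((L:ℝ)+(n:ℝ)+2) =
      -s k n * ((n:ℝ)+(k:ℝ)+2) * ((L:ℝ)-(k:ℝ)+(n:ℝ)+1)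
        + s (k+1) n * ((L:ℝ)-(k:ℝ)) * ((k:ℝ)+1)

theorem isSignRecursion_neg_one_pow (L : ℕ) : IsSignRecursion L (fun _ n => (-1 : ℝ) ^ n) := by
  intro k _ n
  ring

theorem IsSignRecursion.eq_of_eq_at_zero {L : ℕ} {s t : ℕ → ℕ → ℝ}
    (hs : IsSignRecursion L s) (ht : IsSignRecursion L t) (h0 : ∀ k, k ≤ L → s k 0 = t k 0) :
    ∀ k, k ≤ L → ∀ n, s k n = t k n := by
  intro k hk n
  induction n generalizing k with
  | zero => exact h0 k hk
  | succ n ih =>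
    have hnext : s (k+1) n * ((L:ℝ)-(k:ℝ)) = t (k+1) n * ((L:ℝ)-(k:ℝ)) := by
      rcases hk.eq_or_lt with rfl | hlt
      · simp
      · rw [ih (k+1) hlt]
    have hdiff : (s k (n+1) - t k (n+1)) * (((n:ℝ)+1) * ((L:ℝ)+(n:ℝ)+2)) = 0 := by
      have hsk := hs k hk n
      rw [ih k hk] at hsk
      linear_combination hsk - ht k hk n + ((k:ℝ)+1) * hnext
    have hcoeff : ((n:ℝ)+1) * ((L:ℝ)+(n:ℝ)+2) ≠ 0 := by positivity
    exact sub_eq_zero.mp ((mul_eq_zero.mp hdiff).resolve_right hcoeff)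

theorem sign_determination_general (L : ℕ) (sgn : ℕ → ℕ → ℝ)
    (hinit : ∀ k, sgn k 0 = 1)
    (hrec : ∀ k, k ≤ L → ∀ n,
      sgn k (n+1) * ((n:ℝ)+1) * ((L:ℝ)+(n:ℝ)+2) =
        -sgn k n * ((n:ℝ)+(k:ℝ)+2) * ((L:ℝ)-(k:ℝ)+(n:ℝ)+1)
          + sgn (k+1) n * ((L:ℝ)-(k:ℝ)) * ((k:ℝ)+1)) :
    ∀ k, k ≤ L → ∀ n, sgn k n = (-1:ℝ)^n :=
  IsSignRecursion.eq_of_eq_at_zero hrec (isSignRecursion_neg_one_pow L)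
    (fun k _ => by simpa using hinit k)

/-- The sign determination for the leading coefficients `c_{k0}(n)`: if
`sgn_k(n) ∈ {±1}` satisfies `sgn_k(0) = 1` and the recursion
`sgn_k(n+1)(n+1)(2ℓ+n+2) = -sgn_k(n)(n+k+2)(2ℓ-k+n+1) + sgn_{k+1}(n)(2ℓ-k)(k+1)`
for `0 ≤ k ≤ 2ℓ` (the last term vanishing at `k = 2ℓ`), then `sgn_k(n) = (-1)^n`.
Here `L = 2ℓ ≥ 1`. -/
theorem sign_determination (L : ℕ) (hL : 1 ≤ L) (sgn : ℕ → ℕ → ℝ)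
    (hpm : ∀ k n, sgn k n = 1 ∨ sgn k n = -1)
    (hinit : ∀ k, sgn k 0 = 1)
    (hrec : ∀ k, k ≤ L → ∀ n,
      sgn k (n+1) * ((n:ℝ)+1) * ((L:ℝ)+(n:ℝ)+2) =
        -sgn k n * ((n:ℝ)+(k:ℝ)+2) * ((L:ℝ)-(k:ℝ)+(n:ℝ)+1)
          + sgn (k+1) n * ((L:ℝ)-(k:ℝ)) * ((k:ℝ)+1)) :
    ∀ k, k ≤ L → ∀ n, sgn k n = (-1:ℝ)^n :=
  sign_determination_general L sgn hinit hrec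
end
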